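/- arXiv:2104.01585 — 5 statements merged into one kernel-verified Lean document; each statement's English description precedes it below -/
import Mathlib

section
/- Let κ > 0, ε > 0, V ∈ ℝ. Suppose u, E : [0,1] → ℝ are continuously differentiable, ε·E'(x) = −u(x) for all x ∈ [0,1], ∫₀¹ E(x) dx = V, and the flux boundary conditions u'(0) + κ²ε·E(0) = 0 and u'(1) + κ²ε·E(1) = 0 hold. Then u'(0) = −κ²∫₀¹ (1−s)·u(s) ds − εκ²V and u'(1) = κ²∫₀¹ s·u(s) ds − εκ²V. -/
open Set

/-! Integrating `(x - c) E'(x)` by parts over `[0,1]` and using `ε E' = -u` expresses `ε E` at an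
endpoint through `ε ∫₀¹ E = ε V` and a moment of `u`: take `c = 1` for `x = 0` and `c = 0` for
`x = 1`. The flux conditions `u' = -κ² ε E` at the endpoints then give the non-local conditions. -/

open intervalIntegral in
theorem integral_sub_mul_derivWithin_of_contDiffOn {a b : ℝ} (hab : a < b) {E : ℝ → ℝ}
    (hE : ContDiffOn ℝ 1 E (Icc a b)) (c : ℝ) :
    ∫ x in a..b, (x - c) * derivWithin E (Icc a b) x
      = (b - c) * E b - (a - c) * E a - ∫ x in a..b, E x := by
  have hIcc : uIcc a b = Icc a b := uIcc_of_le hab.le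
  have hE' : IntervalIntegrable (derivWithin E (Icc a b)) MeasureTheory.volume a b :=
    (hE.continuousOn_derivWithin (uniqueDiffOn_Icc hab) le_rfl).intervalIntegrable_of_Icc hab.le
  have := integral_mul_deriv_eq_deriv_mul_of_hasDerivWithinAt (u := fun x => x - c)
    (u' := fun _ => 1) (fun x _ => (hasDerivWithinAt_id x _).sub_const c)
    (fun x hx => by
      rw [hIcc] at hx ⊢
      exact ((hE.differentiableOn one_ne_zero) x hx).hasDerivWithinAt)
    intervalIntegrable_const hE'
  simpa using this

theorem mul_sub_mul_eq_integral_add_integral_of_mul_derivWithin_eq_neg {a b ε c : ℝ} (hab : a < b)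
    {u E : ℝ → ℝ} (hE : ContDiffOn ℝ 1 E (Icc a b))
    (hfield : ∀ x ∈ Icc a b, ε * derivWithin E (Icc a b) x = -u x) :
    ε * ((b - c) * E b - (a - c) * E a)
      = ε * (∫ x in a..b, E x) + ∫ x in a..b, (c - x) * u x := by
  have hmoment : ε * ∫ x in a..b, (x - c) * derivWithin E (Icc a b) x
      = ∫ x in a..b, (c - x) * u x := by
    rw [← intervalIntegral.integral_const_mul]
    refine intervalIntegral.integral_congr fun x hx => ?_
    rw [uIcc_of_le hab.le] at hx
    linear_combination (x - c) * hfield x hx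
  rw [integral_sub_mul_derivWithin_of_contDiffOn hab hE c] at hmoment
  linear_combination hmoment

theorem linearized_PNP_nonlocal_bc_general
    (κ ε V : ℝ)
    (u E : ℝ → ℝ)
    (hE : ContDiffOn ℝ 1 E (Icc 0 1))
    (hfield : ∀ x ∈ Icc (0:ℝ) 1, ε * derivWithin E (Icc 0 1) x = - u x)
    (hV : (∫ x in (0:ℝ)..1, E x) = V)
    (hb0 : derivWithin u (Icc 0 1) 0 + κ ^ 2 * ε * E 0 = 0)
    (hb1 : derivWithin u (Icc 0 1) 1 + κ ^ 2 * ε * E 1 = 0) :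
    derivWithin u (Icc 0 1) 0
      = -κ ^ 2 * (∫ s in (0:ℝ)..1, (1 - s) * u s) - ε * κ ^ 2 * V ∧
    derivWithin u (Icc 0 1) 1
      = κ ^ 2 * (∫ s in (0:ℝ)..1, s * u s) - ε * κ ^ 2 * V := by
  have hleft := mul_sub_mul_eq_integral_add_integral_of_mul_derivWithin_eq_neg (c := 1) one_pos hE hfield
  have hright := mul_sub_mul_eq_integral_add_integral_of_mul_derivWithin_eq_neg (c := 0) one_pos hE hfield
  simp only [zero_sub, neg_mul, intervalIntegral.integral_neg, hV] at hleft hright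
  constructor
  · linear_combination hb0 - κ ^ 2 * hleft
  · linear_combination hb1 - κ ^ 2 * hright

/-- **Lemma 2.1 (reduction of the Poisson boundary conditions).**
If `ε E' = -u` on `[0,1]`, `∫₀¹ E = V`, and the flux boundary conditions
`u'(0) + κ²ε E(0) = 0`, `u'(1) + κ²ε E(1) = 0` hold, then `u` satisfies the
non-local boundary conditions
`u'(0) = -κ² ∫₀¹ (1-s) u(s) ds - εκ²V` and `u'(1) = κ² ∫₀¹ s u(s) ds - εκ²V`. -/
theorem linearized_PNP_nonlocal_bc
    (κ ε V : ℝ) (hκ : 0 < κ) (hε : 0 < ε)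
    (u E : ℝ → ℝ)
    (hu : ContDiffOn ℝ 1 u (Icc 0 1))
    (hE : ContDiffOn ℝ 1 E (Icc 0 1))
    (hfield : ∀ x ∈ Icc (0:ℝ) 1, ε * derivWithin E (Icc 0 1) x = - u x)
    (hV : (∫ x in (0:ℝ)..1, E x) = V)
    (hb0 : derivWithin u (Icc 0 1) 0 + κ ^ 2 * ε * E 0 = 0)
    (hb1 : derivWithin u (Icc 0 1) 1 + κ ^ 2 * ε * E 1 = 0) :
    derivWithin u (Icc 0 1) 0
      = -κ ^ 2 * (∫ s in (0:ℝ)..1, (1 - s) * u s) - ε * κ ^ 2 * V ∧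
    derivWithin u (Icc 0 1) 1
      = κ ^ 2 * (∫ s in (0:ℝ)..1, s * u s) - ε * κ ^ 2 * V :=
  linearized_PNP_nonlocal_bc_general κ ε V u E hE hfield hV hb0 hb1
end

section
/- Let κ > 0 and let u : [0,1] × [0,∞) → ℝ be a classical solution (C² in x, C¹ in t, continuous up to the boundary) of u_t = u_xx − κ²u on (0,1) × (0,∞), satisfying for every t ≥ 0 the non-local boundary conditions u_x(0,t) = −κ²∫₀¹ (1−s)·u(s,t) ds and u_x(1,t) = κ²∫₀¹ s·u(s,t) ds. Then the total charge ∫₀¹ u(x,t) dx is constant in t: for all t ≥ 0, ∫₀¹ u(x,t) dx = ∫₀¹ u(x,0) dx. -/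
/-- A classical solution of `w_t = w_xx - c·w` on `(0,1) × (0,∞)`
(`C²` in `x`, `C¹` in `t`, continuous up to the boundary), satisfying the
non-local boundary conditions
`w_x(0,t) = -κ² ∫₀¹ (1-s) w(s,t) ds`, `w_x(1,t) = κ² ∫₀¹ s w(s,t) ds`. -/
def IsClassicalSol (κ c : ℝ) (w : ℝ → ℝ → ℝ) : Prop :=
  (∀ t ∈ Set.Ici (0:ℝ), ContDiffOn ℝ 2 (fun x => w x t) (Set.Icc 0 1)) ∧
  (∀ x ∈ Set.Icc (0:ℝ) 1, ContDiffOn ℝ 1 (fun t => w x t) (Set.Ici 0)) ∧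
  ContinuousOn (fun p : ℝ × ℝ => w p.1 p.2) (Set.Icc 0 1 ×ˢ Set.Ici 0) ∧
  (∀ x ∈ Set.Ioo (0:ℝ) 1, ∀ t > (0:ℝ),
    deriv (fun τ => w x τ) t = deriv (deriv (fun y => w y t)) x - c * w x t) ∧
  (∀ t ∈ Set.Ici (0:ℝ),
    derivWithin (fun x => w x t) (Set.Icc 0 1) 0
      = -κ ^ 2 * ∫ s in (0:ℝ)..1, (1 - s) * w s t) ∧
  (∀ t ∈ Set.Ici (0:ℝ),
    derivWithin (fun x => w x t) (Set.Icc 0 1) 1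
      = κ ^ 2 * ∫ s in (0:ℝ)..1, s * w s t)

/-!
The right derivative of the charge `Q(t) = ∫₀¹ u(x,t) dx` is
`∫₀¹ u_t = u_x(1,t) - u_x(0,t) - κ²Q(t)`, which vanishes by the boundary conditions, provided one
may differentiate under the integral sign. Nothing in the hypotheses bounds `u_t` jointly in
`(x,t)`, and this is where the work lies. Since `u_t(·,τ)` is bounded for each `τ > 0` and
`u_t(x,·)` is continuous, Baire's theorem gives a strip `[0,1] × [α,β]` inside any time interval
on which `u_t` is uniformly bounded. The time difference quotients of `u` solve the same
equation, so the maximum principle carries this bound to `[0,1] × [α,T]`, the lateral bound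
coming from continuity of `u_t(0,·)` and `u_t(1,·)`. Dominated convergence then gives `Q' = 0`
on `[α,T]`; letting `α → 0` and using continuity of `Q` at `0` gives `Q(t) = Q(0)`.
-/

open Set Filter Topology MeasureTheory
open scoped Interval

/-- Continuity cannot be dropped, as `deriv` is `0` where `f` is not differentiable: think of
`x ^ 2 / 2` redefined to be `1` at `0`. -/
theorem IsLocalMax.deriv_deriv_nonpos {f : ℝ → ℝ} {x₀ : ℝ} (h : IsLocalMax f x₀)
    (hc : ContinuousAt f x₀) : deriv (deriv f) x₀ ≤ 0 := by
  by_contra! hpos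
  have hmin : IsLocalMin f x₀ := isLocalMin_of_deriv_deriv_pos hpos h.deriv_eq_zero hc
  have hconst : f =ᶠ[𝓝 x₀] fun _ => f x₀ := by
    filter_upwards [h, hmin] with y hle hge using le_antisymm hle hge
  have hderiv : deriv f =ᶠ[𝓝 x₀] fun _ => 0 := by
    filter_upwards [hconst.deriv] with y hy
    rw [hy, deriv_const]
  rw [hderiv.deriv_eq, deriv_const] at hpos
  exact lt_irrefl _ hpos

theorem IsMaxOn.hasDerivAt_nonneg_of_mem_Ioc {φ : ℝ → ℝ} {a b t₀ m : ℝ}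
    (h : IsMaxOn φ (Icc a b) t₀) (ht₀ : t₀ ∈ Ioc a b) (hφ : HasDerivAt φ m t₀) : 0 ≤ m := by
  have hseg : segment ℝ t₀ a ⊆ Icc a b := by
    rw [segment_symm, segment_eq_Icc ht₀.1.le]
    exact Icc_subset_Icc_right ht₀.2
  have := h.localize.hasFDerivWithinAt_nonpos hφ.hasDerivWithinAt.hasFDerivWithinAt
    (sub_mem_posTangentConeAt_of_segment_subset hseg)
  simp only [ContinuousLinearMap.toSpanSingleton_apply, smul_eq_mul] at this
  nlinarith [ht₀.1]

theorem exists_Icc_subset_of_Ioo_subset_iUnion {A : ℕ → Set ℝ} (hA : ∀ n, IsClosed (A n))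
    {a b : ℝ} (hab : a < b) (hcov : Ioo a b ⊆ ⋃ n, A n) :
    ∃ n α β, a < α ∧ α < β ∧ β < b ∧ Icc α β ⊆ A n := by
  obtain ⟨n, τ, hτ⟩ : ∃ n, (Ioo a b ∩ interior (A n)).Nonempty := by
    by_contra! hempty
    have hdense : ∀ n, Dense (A n ∩ Icc a b)ᶜ := fun n => by
      rw [← interior_eq_empty_iff_dense_compl, interior_inter, interior_Icc, inter_comm]
      exact hempty n
    obtain ⟨τ, hτ, hτab⟩ := (dense_iInter_of_isOpen
      (fun n => ((hA n).inter isClosed_Icc).isOpen_compl) hdense).exists_mem_open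
      isOpen_Ioo (nonempty_Ioo.2 hab)
    obtain ⟨n, hn⟩ := mem_iUnion.1 (hcov hτab)
    exact mem_iInter.1 hτ n ⟨hn, Ioo_subset_Icc_self hτab⟩
  obtain ⟨ε, hε, hball⟩ := Metric.isOpen_iff.1 (isOpen_Ioo.inter isOpen_interior) τ hτ
  have hsub : Icc (τ - ε / 2) (τ + ε / 2) ⊆ Ioo a b ∩ interior (A n) := by
    rw [← Real.closedBall_eq_Icc]
    exact (Metric.closedBall_subset_ball (half_lt_self hε)).trans hball
  have hleft := (hsub (left_mem_Icc.2 (by linarith))).1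
  have hright := (hsub (right_mem_Icc.2 (by linarith))).1
  exact ⟨n, _, _, hleft.1, by linarith, hright.2,
    hsub.trans (inter_subset_right.trans interior_subset)⟩

section MaximumPrinciple

variable {c : ℝ} {w : ℝ → ℝ → ℝ} {a b α T B : ℝ}

theorem le_of_le_on_parabolic_boundary (hc : 0 ≤ c) (hB : 0 ≤ B)
    (hcont : ContinuousOn (fun p : ℝ × ℝ => w p.1 p.2) (Icc a b ×ˢ Icc α T))
    (hpde : ∀ x ∈ Ioo a b, ∀ t ∈ Ioc α T,
      HasDerivAt (fun τ => w x τ) (deriv (deriv fun y => w y t) x - c * w x t) t)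
    (hbot : ∀ x ∈ Icc a b, w x α ≤ B) (hleft : ∀ t ∈ Icc α T, w a t ≤ B)
    (hright : ∀ t ∈ Icc α T, w b t ≤ B) :
    ∀ x ∈ Icc a b, ∀ t ∈ Icc α T, w x t ≤ B := by
  intro x hx t ht
  -- At a maximum of `w - ε (t - α)` off the parabolic boundary and above `B`,
  -- `∂ₜw ≥ ε > 0` while `∂ₓ²w - c w ≤ 0`.
  have key : ∀ ε > 0, w x t ≤ B + ε * (t - α) := by
    intro ε hε
    obtain ⟨⟨x₀, t₀⟩, ⟨hx₀, ht₀⟩, hmax⟩ := (isCompact_Icc.prod isCompact_Icc).exists_isMaxOn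
      ⟨(x, t), hx, ht⟩ (hcont.sub (by fun_prop : Continuous fun p : ℝ × ℝ =>
        ε * (p.2 - α)).continuousOn)
    have hmax' : ∀ y ∈ Icc a b, ∀ τ ∈ Icc α T,
        w y τ - ε * (τ - α) ≤ w x₀ t₀ - ε * (t₀ - α) :=
      fun y hy τ hτ => hmax (mk_mem_prod hy hτ)
    suffices w x₀ t₀ - ε * (t₀ - α) ≤ B by linarith [hmax' x hx t ht]
    by_contra! hgt
    have hεt₀ : 0 ≤ ε * (t₀ - α) := mul_nonneg hε.le (sub_nonneg.2 ht₀.1)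
    have hx₀' : x₀ ∈ Ioo a b :=
      ⟨hx₀.1.lt_of_ne (by rintro rfl; linarith [hleft t₀ ht₀]),
        hx₀.2.lt_of_ne (by rintro rfl; linarith [hright t₀ ht₀])⟩
    have ht₀' : t₀ ∈ Ioc α T := ⟨ht₀.1.lt_of_ne (by rintro rfl; linarith [hbot x₀ hx₀]), ht₀.2⟩
    have htime : 0 ≤ deriv (deriv fun y => w y t₀) x₀ - c * w x₀ t₀ - ε * 1 :=
      IsMaxOn.hasDerivAt_nonneg_of_mem_Ioc (fun τ hτ => hmax (mk_mem_prod hx₀ hτ)) ht₀'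
        ((hpde x₀ hx₀' t₀ ht₀').sub (((hasDerivAt_id t₀).sub_const α).const_mul ε))
    have hspace : deriv (deriv fun y => w y t₀) x₀ ≤ 0 := by
      have hslice : ContinuousOn (fun y => w y t₀) (Icc a b) :=
        hcont.comp (by fun_prop : Continuous fun y : ℝ => (y, t₀)).continuousOn
          fun y hy => mk_mem_prod hy ht₀
      refine (IsMaxOn.isLocalMax (fun y hy => ?_) (Icc_mem_nhds hx₀'.1 hx₀'.2))
        |>.deriv_deriv_nonpos (hslice.continuousAt (Icc_mem_nhds hx₀'.1 hx₀'.2))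
      show w y t₀ ≤ w x₀ t₀
      linarith [hmax' y hy t₀ ht₀]
    nlinarith [mul_nonneg hc (hB.trans (by linarith : B ≤ w x₀ t₀))]
  have hlim : Tendsto (fun ε => B + ε * (t - α)) (𝓝[>] 0) (𝓝 B) := by
    have hcontε : Continuous fun ε : ℝ => B + ε * (t - α) := by fun_prop
    simpa using (hcontε.tendsto 0).mono_left nhdsWithin_le_nhds
  exact ge_of_tendsto hlim (eventually_mem_nhdsWithin.mono key)

theorem abs_le_of_abs_le_on_parabolic_boundary (hc : 0 ≤ c) (hB : 0 ≤ B)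
    (hcont : ContinuousOn (fun p : ℝ × ℝ => w p.1 p.2) (Icc a b ×ˢ Icc α T))
    (hpde : ∀ x ∈ Ioo a b, ∀ t ∈ Ioc α T,
      HasDerivAt (fun τ => w x τ) (deriv (deriv fun y => w y t) x - c * w x t) t)
    (hbot : ∀ x ∈ Icc a b, |w x α| ≤ B) (hleft : ∀ t ∈ Icc α T, |w a t| ≤ B)
    (hright : ∀ t ∈ Icc α T, |w b t| ≤ B) :
    ∀ x ∈ Icc a b, ∀ t ∈ Icc α T, |w x t| ≤ B := by
  have hneg := le_of_le_on_parabolic_boundary (w := fun x t => -w x t) hc hB hcont.neg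
    (fun x hx t ht => (hpde x hx t ht).neg.congr_deriv (by simp only [deriv.fun_neg']; ring))
    (fun x hx => (neg_le_abs _).trans (hbot x hx))
    (fun t ht => (neg_le_abs _).trans (hleft t ht))
    (fun t ht => (neg_le_abs _).trans (hright t ht))
  have hpos := le_of_le_on_parabolic_boundary hc hB hcont hpde
    (fun x hx => (le_abs_self _).trans (hbot x hx))
    (fun t ht => (le_abs_self _).trans (hleft t ht))
    (fun t ht => (le_abs_self _).trans (hright t ht))
  exact fun x hx t ht => abs_le.2 ⟨by linarith [hneg x hx t ht], hpos x hx t ht⟩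

end MaximumPrinciple

theorem deriv_deriv_eq_iteratedDerivWithin_two {g : ℝ → ℝ} {s : Set ℝ} {x : ℝ}
    (hs : UniqueDiffOn ℝ s) (hg : ContDiffOn ℝ 2 g s) (hx : s ∈ 𝓝 x) :
    deriv (deriv g) x = iteratedDerivWithin 2 g s x := by
  rw [iteratedDerivWithin_eq_iteratedDeriv hs (hg.contDiffAt hx) (mem_of_mem_nhds hx),
    iteratedDeriv_succ, iteratedDeriv_one]

theorem integral_iteratedDerivWithin_two_Icc {g : ℝ → ℝ} {a b : ℝ} (hab : a < b)
    (hg : ContDiffOn ℝ 2 g (Icc a b)) :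
    ∫ x in a..b, iteratedDerivWithin 2 g (Icc a b) x
      = derivWithin g (Icc a b) b - derivWithin g (Icc a b) a := by
  rw [iteratedDerivWithin_succ, iteratedDerivWithin_one]
  exact intervalIntegral.integral_derivWithin_Icc_of_contDiffOn_Icc
    (hg.derivWithin (uniqueDiffOn_Icc hab) (by norm_num)) hab.le

theorem continuousOn_intervalIntegral_of_continuousOn_Icc_prod_Ici {u : ℝ → ℝ → ℝ}
    {a b t₀ : ℝ} (hab : a ≤ b)
    (hu : ContinuousOn (fun p : ℝ × ℝ => u p.1 p.2) (Icc a b ×ˢ Ici t₀)) :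
    ContinuousOn (fun t => ∫ x in a..b, u x t) (Ici t₀) := by
  set v : ℝ → ℝ → ℝ := fun t x => u (projIcc a b hab x) (max t t₀)
  have hproj : Continuous fun p : ℝ × ℝ => ((projIcc a b hab p.2 : ℝ), max p.1 t₀) := by
    fun_prop
  have hv : Continuous (Function.uncurry v) :=
    hu.comp_continuous hproj fun p =>
      mk_mem_prod (projIcc a b hab p.2).2 (mem_Ici.2 (le_max_right _ _))
  refine (intervalIntegral.continuous_parametric_intervalIntegral_of_continuous' hv a b)
    |>.continuousOn.congr fun t ht => intervalIntegral.integral_congr fun x hx => ?_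
  rw [uIcc_of_le hab] at hx
  simp [v, projIcc_of_mem hab hx, max_eq_left (mem_Ici.1 ht)]

theorem hasDerivWithinAt_intervalIntegral_of_abs_slope_le {u : ℝ → ℝ → ℝ} {u' : ℝ → ℝ}
    {a b t h₀ B : ℝ} (hab : a ≤ b) (hh₀ : 0 < h₀)
    (hcont : ∀ s ∈ Icc t (t + h₀), ContinuousOn (fun x => u x s) (Icc a b))
    (hderiv : ∀ x ∈ Icc a b, HasDerivWithinAt (fun s => u x s) (u' x) (Ici t) t)
    (hbound : ∀ s ∈ Ioc t (t + h₀), ∀ x ∈ Icc a b, |(u x s - u x t) / (s - t)| ≤ B) :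
    HasDerivWithinAt (fun s => ∫ x in a..b, u x s) (∫ x in a..b, u' x) (Ici t) t := by
  have hnear : Ioc t (t + h₀) ∈ 𝓝[>] t := Ioc_mem_nhdsGT (by linarith)
  have hIoc : Ι a b ⊆ Icc a b := by rw [uIoc_of_le hab]; exact Ioc_subset_Icc_self
  have hslope : ∀ s ∈ Ioc t (t + h₀), ∫ x in a..b, (u x s - u x t) / (s - t)
      = slope (fun s => ∫ x in a..b, u x s) t s := fun s hs => by
    have hint : ∀ r ∈ Icc t (t + h₀), IntervalIntegrable (fun x => u x r) volume a b :=
      fun r hr => (hcont r hr).intervalIntegrable_of_Icc hab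
    rw [slope_def_field, intervalIntegral.integral_div, intervalIntegral.integral_sub
      (hint s (Ioc_subset_Icc_self hs)) (hint t (left_mem_Icc.2 (by linarith)))]
  rw [← hasDerivWithinAt_Ioi_iff_Ici, hasDerivWithinAt_iff_tendsto_slope' self_notMem_Ioi]
  refine (intervalIntegral.tendsto_integral_filter_of_dominated_convergence (fun _ => B)
    ?_ ?_ intervalIntegrable_const ?_).congr' (eventuallyEq_of_mem hnear hslope)
  · filter_upwards [hnear] with s hs
    have hdiff := (hcont s (Ioc_subset_Icc_self hs)).sub (hcont t (left_mem_Icc.2 (by linarith)))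
    exact ((hdiff.div_const _).mono hIoc).aestronglyMeasurable measurableSet_uIoc
  · filter_upwards [hnear] with s hs
    exact ae_of_all _ fun x hx => hbound s hs x (hIoc hx)
  · refine ae_of_all _ fun x hx => ?_
    have := (hasDerivWithinAt_iff_tendsto_slope' self_notMem_Ioi).1
      (hderiv x (hIoc hx)).Ioi_of_Ici
    simpa only [slope_fun_def_field] using this

namespace IsClassicalSol

variable {κ c : ℝ} {u : ℝ → ℝ → ℝ}

theorem contDiffOn_slice (hu : IsClassicalSol κ c u) {t : ℝ} (ht : 0 ≤ t) :
    ContDiffOn ℝ 2 (fun x => u x t) (Icc 0 1) :=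
  hu.1 t ht

theorem continuousOn (hu : IsClassicalSol κ c u) :
    ContinuousOn (fun p : ℝ × ℝ => u p.1 p.2) (Icc 0 1 ×ˢ Ici 0) :=
  hu.2.2.1

theorem deriv_time (hu : IsClassicalSol κ c u) {x t : ℝ} (hx : x ∈ Ioo 0 1) (ht : 0 < t) :
    deriv (fun τ => u x τ) t = deriv (deriv fun y => u y t) x - c * u x t :=
  hu.2.2.2.1 x hx t ht

theorem hasDerivAt_time (hu : IsClassicalSol κ c u) {x t : ℝ} (hx : x ∈ Icc 0 1)
    (ht : 0 < t) : HasDerivAt (fun τ => u x τ) (deriv (fun τ => u x τ) t) t :=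
  ((((hu.2.1 x hx).differentiableOn one_ne_zero) t ht.le).differentiableAt
    (Ici_mem_nhds ht)).hasDerivAt

theorem continuousOn_deriv_time (hu : IsClassicalSol κ c u) {x : ℝ} (hx : x ∈ Icc 0 1) :
    ContinuousOn (fun t => deriv (fun τ => u x τ) t) (Ioi 0) :=
  ((hu.2.1 x hx).mono Ioi_subset_Ici_self).continuousOn_deriv_of_isOpen isOpen_Ioi le_rfl

theorem deriv_time_eq_iteratedDerivWithin (hu : IsClassicalSol κ c u) {x t : ℝ}
    (hx : x ∈ Ioo 0 1) (ht : 0 < t) :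
    deriv (fun τ => u x τ) t
      = iteratedDerivWithin 2 (fun y => u y t) (Icc 0 1) x - c * u x t := by
  rw [hu.deriv_time hx ht, deriv_deriv_eq_iteratedDerivWithin_two (uniqueDiffOn_Icc one_pos)
    (hu.contDiffOn_slice ht.le) (Icc_mem_nhds hx.1 hx.2)]

theorem continuousOn_charge (hu : IsClassicalSol κ c u) :
    ContinuousOn (fun t => ∫ x in (0:ℝ)..1, u x t) (Ici 0) :=
  continuousOn_intervalIntegral_of_continuousOn_Icc_prod_Ici zero_le_one hu.continuousOn

theorem integral_deriv_time (hu : IsClassicalSol κ c u) {t : ℝ} (ht : 0 < t) :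
    ∫ x in (0:ℝ)..1, deriv (fun τ => u x τ) t = (κ ^ 2 - c) * ∫ x in (0:ℝ)..1, u x t := by
  obtain ⟨hbc₀, hbc₁⟩ := hu.2.2.2.2
  have hg := hu.contDiffOn_slice ht.le
  have hint : ∀ f : ℝ → ℝ, ContinuousOn f (Icc 0 1) → IntervalIntegrable f volume 0 1 :=
    fun f hf => hf.intervalIntegrable_of_Icc zero_le_one
  have hmoments : (∫ s in (0:ℝ)..1, s * u s t) + (∫ s in (0:ℝ)..1, (1 - s) * u s t)
      = ∫ s in (0:ℝ)..1, u s t := by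
    rw [← intervalIntegral.integral_add
      (hint (fun s => s * u s t) (continuousOn_id.mul hg.continuousOn))
      (hint (fun s => (1 - s) * u s t)
        ((continuousOn_const.sub continuousOn_id).mul hg.continuousOn))]
    congr 1 with s
    ring
  have hpde : ∫ x in (0:ℝ)..1, deriv (fun τ => u x τ) t
      = ∫ x in (0:ℝ)..1, (iteratedDerivWithin 2 (fun y => u y t) (Icc 0 1) x - c * u x t) := by
    rw [intervalIntegral.integral_of_le zero_le_one, intervalIntegral.integral_of_le zero_le_one,
      ← restrict_Ioo_eq_restrict_Ioc]
    refine integral_congr_ae ?_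
    filter_upwards [self_mem_ae_restrict measurableSet_Ioo] with x hx
    exact hu.deriv_time_eq_iteratedDerivWithin hx ht
  rw [hpde, intervalIntegral.integral_sub
    (hint _ (hg.continuousOn_iteratedDerivWithin le_rfl (uniqueDiffOn_Icc one_pos)))
    ((hint _ hg.continuousOn).const_mul c), intervalIntegral.integral_const_mul,
    integral_iteratedDerivWithin_two_Icc one_pos hg, hbc₀ t ht.le, hbc₁ t ht.le]
  linear_combination κ ^ 2 * hmoments

theorem hasDerivAt_slope_time (hu : IsClassicalSol κ c u) {x t h : ℝ} (hh : 0 ≤ h)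
    (hx : x ∈ Ioo 0 1) (ht : 0 < t) :
    HasDerivAt (fun τ => (u x (τ + h) - u x τ) / h)
      (deriv (deriv fun y => (u y (t + h) - u y t) / h) x - c * ((u x (t + h) - u x t) / h))
      t := by
  have hth : 0 < t + h := by linarith
  have hxI := Ioo_subset_Icc_self hx
  have hnhds := Icc_mem_nhds hx.1 hx.2
  have hsecond : deriv (deriv fun y => (u y (t + h) - u y t) / h) x
      = (deriv (deriv fun y => u y (t + h)) x - deriv (deriv fun y => u y t) x) / h := by
    have h2 : ∀ f : ℝ → ℝ, deriv (deriv f) = iteratedDeriv 2 f := fun f => by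
      rw [iteratedDeriv_succ, iteratedDeriv_one]
    rw [h2, h2, h2, iteratedDeriv_div_const, iteratedDeriv_fun_sub
      ((hu.contDiffOn_slice hth.le).contDiffAt hnhds)
      ((hu.contDiffOn_slice ht.le).contDiffAt hnhds)]
  refine ((((hu.hasDerivAt_time hxI hth).comp_add_const t h).sub
    (hu.hasDerivAt_time hxI ht)).div_const h).congr_deriv ?_
  rw [hsecond, hu.deriv_time hx hth, hu.deriv_time hx ht]
  ring

theorem abs_slope_time_le (hu : IsClassicalSol κ c u) {x t h C : ℝ} (hx : x ∈ Icc 0 1)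
    (ht : 0 < t) (hh : 0 < h) (hC : ∀ τ ∈ Ico t (t + h), |deriv (fun τ' => u x τ') τ| ≤ C) :
    |(u x (t + h) - u x t) / h| ≤ C := by
  have := norm_image_sub_le_of_norm_deriv_le_segment' (f := fun τ => u x τ)
    (fun τ hτ => (hu.hasDerivAt_time hx (ht.trans_le hτ.1)).hasDerivWithinAt) hC (t + h)
    (right_mem_Icc.2 (by linarith))
  rw [abs_div, abs_of_pos hh, div_le_iff₀ hh]
  simpa using this

theorem exists_abs_deriv_time_le (hu : IsClassicalSol κ c u) {t : ℝ} (ht : 0 < t) :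
    ∃ C, ∀ x ∈ Icc (0:ℝ) 1, |deriv (fun τ => u x τ) t| ≤ C := by
  have hg := hu.contDiffOn_slice ht.le
  obtain ⟨C, hC⟩ := isCompact_Icc.exists_bound_of_continuousOn
    ((hg.continuousOn_iteratedDerivWithin le_rfl (uniqueDiffOn_Icc one_pos)).sub
      (continuousOn_const.mul hg.continuousOn))
  refine ⟨max C (max |deriv (fun τ => u 0 τ) t| |deriv (fun τ => u 1 τ) t|), fun x hx => ?_⟩
  rcases eq_endpoints_or_mem_Ioo_of_mem_Icc hx with rfl | rfl | hx'
  · exact le_max_of_le_right (le_max_left _ _)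
  · exact le_max_of_le_right (le_max_right _ _)
  · rw [hu.deriv_time_eq_iteratedDerivWithin hx' ht]
    exact le_max_of_le_left (hC x hx)

theorem exists_abs_deriv_time_le_Icc (hu : IsClassicalSol κ c u) {x a b : ℝ}
    (hx : x ∈ Icc 0 1) (ha : 0 < a) :
    ∃ C, ∀ τ ∈ Icc a b, |deriv (fun τ' => u x τ') τ| ≤ C :=
  isCompact_Icc.exists_bound_of_continuousOn
    ((hu.continuousOn_deriv_time hx).mono fun _ hτ => ha.trans_le hτ.1)

theorem exists_Icc_abs_deriv_time_le (hu : IsClassicalSol κ c u) {a b : ℝ} (ha : 0 < a)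
    (hab : a < b) :
    ∃ α β L, a < α ∧ α < β ∧ β < b ∧
      ∀ τ ∈ Icc α β, ∀ x ∈ Icc (0:ℝ) 1, |deriv (fun τ' => u x τ') τ| ≤ L := by
  set A : ℕ → Set ℝ := fun n =>
    ⋂ x ∈ Icc (0:ℝ) 1, Icc a b ∩ (fun τ => |deriv (fun τ' => u x τ') τ|) ⁻¹' Iic (n : ℝ)
  have hclosed : ∀ n, IsClosed (A n) := fun n => isClosed_biInter fun x hx =>
    ((hu.continuousOn_deriv_time hx).mono fun _ hτ => ha.trans_le hτ.1).abs
      |>.preimage_isClosed_of_isClosed isClosed_Icc isClosed_Iic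
  have hcover : Ioo a b ⊆ ⋃ n, A n := fun τ hτ => by
    obtain ⟨C, hC⟩ := hu.exists_abs_deriv_time_le (ha.trans hτ.1)
    exact mem_iUnion.2 ⟨⌈C⌉₊, mem_iInter₂.2 fun x hx =>
      ⟨Ioo_subset_Icc_self hτ, (hC x hx).trans (Nat.le_ceil C)⟩⟩
  obtain ⟨n, α, β, haα, hαβ, hβb, hsub⟩ :=
    exists_Icc_subset_of_Ioo_subset_iUnion hclosed hab hcover
  exact ⟨α, β, n, haα, hαβ, hβb, fun τ hτ x hx => (mem_iInter₂.1 (hsub hτ) x hx).2⟩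

theorem exists_abs_slope_time_le (hu : IsClassicalSol κ c u) (hc : 0 ≤ c) {α β L : ℝ}
    (hα : 0 < α) (hαβ : α < β)
    (hL : ∀ τ ∈ Icc α β, ∀ x ∈ Icc (0:ℝ) 1, |deriv (fun τ' => u x τ') τ| ≤ L) (T : ℝ) :
    ∃ B, ∀ h ∈ Ioc 0 (β - α), ∀ x ∈ Icc (0:ℝ) 1, ∀ t ∈ Icc α T,
      |(u x (t + h) - u x t) / h| ≤ B := by
  have h0 : (0:ℝ) ∈ Icc (0:ℝ) 1 := left_mem_Icc.2 zero_le_one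
  have h1 : (1:ℝ) ∈ Icc (0:ℝ) 1 := right_mem_Icc.2 zero_le_one
  obtain ⟨C₀, hC₀⟩ := hu.exists_abs_deriv_time_le_Icc (b := T + (β - α)) h0 hα
  obtain ⟨C₁, hC₁⟩ := hu.exists_abs_deriv_time_le_Icc (b := T + (β - α)) h1 hα
  have hL₀ : 0 ≤ L := (abs_nonneg _).trans (hL α (left_mem_Icc.2 hαβ.le) 0 h0)
  refine ⟨max L (max C₀ C₁), fun h hh => ?_⟩
  have hshift : Continuous fun p : ℝ × ℝ => (p.1, p.2 + h) := by fun_prop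
  have hcont : ContinuousOn (fun p : ℝ × ℝ => (u p.1 (p.2 + h) - u p.1 p.2) / h)
      (Icc 0 1 ×ˢ Icc α T) :=
    ((hu.continuousOn.comp hshift.continuousOn fun p hp =>
        mk_mem_prod hp.1 (mem_Ici.2 (by linarith [hp.2.1, hh.1]))).sub
      (hu.continuousOn.mono (prod_mono_right fun _ hτ => mem_Ici.2 (hα.le.trans hτ.1)))).div_const h
  have hlateral : ∀ z ∈ Icc (0:ℝ) 1, ∀ C, (∀ τ ∈ Icc α (T + (β - α)),
      |deriv (fun τ' => u z τ') τ| ≤ C) → ∀ t ∈ Icc α T, |(u z (t + h) - u z t) / h| ≤ C :=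
    fun z hz C hC t ht => hu.abs_slope_time_le hz (hα.trans_le ht.1) hh.1 fun τ hτ =>
      hC τ ⟨ht.1.trans hτ.1, by linarith [hτ.2, ht.2, hh.2]⟩
  exact abs_le_of_abs_le_on_parabolic_boundary hc (le_max_of_le_left hL₀) hcont
    (fun x hx t ht => hu.hasDerivAt_slope_time hh.1.le hx (hα.trans ht.1))
    (fun x hx => (hu.abs_slope_time_le hx hα hh.1 fun τ hτ =>
      hL τ ⟨hτ.1, by linarith [hτ.2, hh.2]⟩ x hx).trans (le_max_left _ _))
    (fun t ht => (hlateral 0 h0 C₀ hC₀ t ht).trans (le_max_of_le_right (le_max_left _ _)))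
    (fun t ht => (hlateral 1 h1 C₁ hC₁ t ht).trans (le_max_of_le_right (le_max_right _ _)))

theorem hasDerivWithinAt_charge (hu : IsClassicalSol κ c u) {t h₀ B : ℝ} (ht : 0 < t)
    (hh₀ : 0 < h₀) (hB : ∀ h ∈ Ioc 0 h₀, ∀ x ∈ Icc (0:ℝ) 1, |(u x (t + h) - u x t) / h| ≤ B) :
    HasDerivWithinAt (fun s => ∫ x in (0:ℝ)..1, u x s) ((κ ^ 2 - c) * ∫ x in (0:ℝ)..1, u x t)
      (Ici t) t := by
  rw [← hu.integral_deriv_time ht]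
  refine hasDerivWithinAt_intervalIntegral_of_abs_slope_le (B := B) zero_le_one hh₀
    (fun s hs => (hu.contDiffOn_slice (ht.le.trans hs.1)).continuousOn)
    (fun x hx => (hu.hasDerivAt_time hx ht).hasDerivWithinAt) fun s hs x hx => ?_
  simpa using hB (s - t) ⟨sub_pos.2 hs.1, by linarith [hs.2]⟩ x hx

theorem charge_eq_of_pos (hu : IsClassicalSol κ (κ ^ 2) u) {s t : ℝ} (hs : 0 < s)
    (hst : s ≤ t) :
    ∫ x in (0:ℝ)..1, u x t = ∫ x in (0:ℝ)..1, u x s := by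
  obtain ⟨α, β, L, hα, hαβ, hβs, hL⟩ := hu.exists_Icc_abs_deriv_time_le (half_pos hs)
    (half_lt_self hs)
  have hα₀ : 0 < α := (half_pos hs).trans hα
  obtain ⟨B, hB⟩ := hu.exists_abs_slope_time_le (sq_nonneg κ) hα₀ hαβ hL t
  have hconst := constant_of_has_deriv_right_zero
    (hu.continuousOn_charge.mono fun τ hτ => hα₀.le.trans hτ.1) fun τ hτ => by
      simpa using hu.hasDerivWithinAt_charge (hα₀.trans_le hτ.1) (sub_pos.2 hαβ)
        fun h hh x hx => hB h hh x hx τ (Ico_subset_Icc_self hτ)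
  rw [hconst t ⟨by linarith, le_rfl⟩, hconst s ⟨by linarith, hst⟩]

end IsClassicalSol

theorem linearized_PNP_charge_conservation_general
    (κ : ℝ) (u : ℝ → ℝ → ℝ)
    (hu : IsClassicalSol κ (κ ^ 2) u) :
    ∀ t ≥ (0:ℝ), (∫ x in (0:ℝ)..1, u x t) = ∫ x in (0:ℝ)..1, u x 0 := by
  intro t ht
  rcases ht.eq_or_lt with rfl | ht
  · rfl
  have hlim : Tendsto (fun s => ∫ x in (0:ℝ)..1, u x s) (𝓝[>] 0) (𝓝 (∫ x in (0:ℝ)..1, u x 0)) :=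
    (hu.continuousOn_charge 0 self_mem_Ici).mono_left (nhdsWithin_mono _ Ioi_subset_Ici_self)
  have hconst : (fun _ => ∫ x in (0:ℝ)..1, u x t) =ᶠ[𝓝[>] 0] fun s => ∫ x in (0:ℝ)..1, u x s :=
    eventually_of_mem (Ioc_mem_nhdsGT ht) fun s hs => hu.charge_eq_of_pos hs.1 hs.2
  exact tendsto_nhds_unique (tendsto_const_nhds.congr' hconst) hlim

/-- **Conservation of total charge.** For a classical solution of the
linearized PNP equation `u_t = u_xx - κ²u` under the non-local boundary
conditions, the total charge `∫₀¹ u(x,t) dx` is constant in time. -/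
theorem linearized_PNP_charge_conservation
    (κ : ℝ) (hκ : 0 < κ) (u : ℝ → ℝ → ℝ)
    (hu : IsClassicalSol κ (κ ^ 2) u) :
    ∀ t ≥ (0:ℝ), (∫ x in (0:ℝ)..1, u x t) = ∫ x in (0:ℝ)..1, u x 0 :=
  linearized_PNP_charge_conservation_general κ u hu
end

section
/- Let κ > 0 and let λ > 0 satisfy cos(√λ/2) ≠ 0 and the transcendental equation 2·tan(√λ/2) = √λ·(λ + κ²)/κ². Then the function ψ(x) = sin(√λ·(x − 1/2)) satisfies ψ''(x) + λ·ψ(x) = 0 on [0,1], together with the non-local boundary conditions ψ'(0) = −κ²∫₀¹(1−s)·ψ(s)ds and ψ'(1) = κ²∫₀¹ s·ψ(s)ds. Hence ψ is an eigenfunction of d²/dx² under these boundary conditions with eigenvalue −λ. -/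
/-!
Differentiating twice gives `ψ'' = -λψ` directly. Writing `ω = √λ`, integration by parts gives
`∫₀¹ s ψ(s) ds = 2 sin(ω/2)/ω² - cos(ω/2)/ω`, and the reflection `s ↦ 1 - s`, under which `ψ` is
odd, turns `∫₀¹ (1 - s) ψ(s) ds` into `-∫₀¹ s ψ(s) ds`; as `ψ'(0) = ψ'(1) = ω cos(ω/2)`, both
boundary conditions reduce to the single identity `2κ² sin(ω/2) = ω(ω² + κ²) cos(ω/2)`, which is
the transcendental equation with the denominators cleared.
-/

open Real

section SinMulSub

variable (ω c : ℝ)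

theorem hasDerivAt_sin_mul_sub (x : ℝ) :
    HasDerivAt (fun y => sin (ω * (y - c))) (ω * cos (ω * (x - c))) x := by
  simpa [mul_comm] using ((hasDerivAt_id x).sub_const c |>.const_mul ω).sin

theorem hasDerivAt_cos_mul_sub (x : ℝ) :
    HasDerivAt (fun y => cos (ω * (y - c))) (-(ω * sin (ω * (x - c)))) x := by
  simpa [mul_comm] using ((hasDerivAt_id x).sub_const c |>.const_mul ω).cos

theorem deriv_sin_mul_sub :
    deriv (fun y => sin (ω * (y - c))) = fun x => ω * cos (ω * (x - c)) :=
  funext fun x => (hasDerivAt_sin_mul_sub ω c x).deriv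

theorem deriv_deriv_sin_mul_sub (x : ℝ) :
    deriv (deriv fun y => sin (ω * (y - c))) x = -(ω ^ 2 * sin (ω * (x - c))) := by
  rw [deriv_sin_mul_sub, ((hasDerivAt_cos_mul_sub ω c x).const_mul ω).deriv]
  ring

theorem hasDerivAt_sin_div_sq_sub_mul_cos_div {ω : ℝ} (hω : ω ≠ 0) (x : ℝ) :
    HasDerivAt (fun y => sin (ω * (y - c)) / ω ^ 2 - y * cos (ω * (y - c)) / ω)
      (x * sin (ω * (x - c))) x := by
  refine (((hasDerivAt_sin_mul_sub ω c x).div_const (ω ^ 2)).sub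
    (((hasDerivAt_id' x).mul (hasDerivAt_cos_mul_sub ω c x)).div_const ω)).congr_deriv ?_
  field_simp
  ring

end SinMulSub

theorem integral_mul_sin_mul_sub_half {ω : ℝ} (hω : ω ≠ 0) :
    ∫ s in (0 : ℝ)..1, s * sin (ω * (s - 1 / 2)) = 2 * sin (ω / 2) / ω ^ 2 - cos (ω / 2) / ω := by
  rw [intervalIntegral.integral_eq_sub_of_hasDerivAt
    (fun x _ => hasDerivAt_sin_div_sq_sub_mul_cos_div (1 / 2) hω x)
    ((by fun_prop : Continuous fun s : ℝ => s * sin (ω * (s - 1 / 2))).intervalIntegrable 0 1)]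
  have h1 : ω * ((1 : ℝ) - 1 / 2) = ω / 2 := by ring
  have h0 : ω * ((0 : ℝ) - 1 / 2) = -(ω / 2) := by ring
  rw [h1, h0, sin_neg]
  ring

theorem integral_one_sub_mul_sin_mul_sub_half (ω : ℝ) :
    ∫ s in (0 : ℝ)..1, (1 - s) * sin (ω * (s - 1 / 2))
      = -∫ s in (0 : ℝ)..1, s * sin (ω * (s - 1 / 2)) := by
  have hreflect := intervalIntegral.integral_comp_sub_left
    (fun s : ℝ => s * sin (ω * (1 / 2 - s))) (1 : ℝ) (a := 0) (b := 1)
  simp only [sub_zero, sub_self] at hreflect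
  rw [← intervalIntegral.integral_neg]
  convert hreflect using 1 <;> congr 1 with s
  · rw [show 1 / 2 - (1 - s) = s - 1 / 2 by ring]
  · rw [show ω * (1 / 2 - s) = -(ω * (s - 1 / 2)) by ring, sin_neg, mul_neg]

theorem two_mul_mul_sin_eq_of_two_mul_tan_eq {θ a b : ℝ} (hcos : cos θ ≠ 0) (hb : b ≠ 0)
    (h : 2 * tan θ = a / b) : 2 * b * sin θ = a * cos θ := by
  rw [tan_eq_sin_div_cos] at h
  field_simp at h
  linarith

/-- **Odd-mode eigenfunctions.** If `λ > 0` satisfies `cos(√λ/2) ≠ 0` and the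
transcendental equation `2 tan(√λ/2) = √λ(λ+κ²)/κ²`, then
`ψ(x) = sin(√λ(x-1/2))` satisfies `ψ'' + λψ = 0` on `[0,1]` together with the
non-local boundary conditions `ψ'(0) = -κ²∫₀¹(1-s)ψ(s)ds`,
`ψ'(1) = κ²∫₀¹ s·ψ(s)ds`. Hence `ψ` is an eigenfunction of `d²/dx²` under
these boundary conditions with eigenvalue `-λ`. -/
theorem sin_odd_eigenfunction (κ l : ℝ) (hκ : 0 < κ) (hl : 0 < l)
    (hcos : Real.cos (Real.sqrt l / 2) ≠ 0)
    (htan : 2 * Real.tan (Real.sqrt l / 2)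
      = Real.sqrt l * (l + κ ^ 2) / κ ^ 2) :
    (∀ x ∈ Set.Icc (0:ℝ) 1,
      deriv (deriv (fun y : ℝ => Real.sin (Real.sqrt l * (y - 1/2)))) x
        + l * Real.sin (Real.sqrt l * (x - 1/2)) = 0) ∧
    deriv (fun y : ℝ => Real.sin (Real.sqrt l * (y - 1/2))) 0
      = -κ ^ 2 * ∫ s in (0:ℝ)..1,
          (1 - s) * Real.sin (Real.sqrt l * (s - 1/2)) ∧
    deriv (fun y : ℝ => Real.sin (Real.sqrt l * (y - 1/2))) 1
      = κ ^ 2 * ∫ s in (0:ℝ)..1, s * Real.sin (Real.sqrt l * (s - 1/2)) := by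
  obtain ⟨ω, hω, rfl⟩ : ∃ ω > 0, ω ^ 2 = l := ⟨√l, sqrt_pos.2 hl, sq_sqrt hl.le⟩
  simp only [sqrt_sq hω.le] at hcos htan ⊢
  have hkey := two_mul_mul_sin_eq_of_two_mul_tan_eq hcos (by positivity) htan
  have hright : deriv (fun y => sin (ω * (y - 1 / 2))) 1
      = κ ^ 2 * ∫ s in (0 : ℝ)..1, s * sin (ω * (s - 1 / 2)) := by
    rw [deriv_sin_mul_sub, integral_mul_sin_mul_sub_half hω.ne']
    field_simp
    norm_num
    linear_combination -hkey
  refine ⟨fun x _ => by rw [deriv_deriv_sin_mul_sub]; ring, ?_, hright⟩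
  rw [integral_one_sub_mul_sin_mul_sub_half, neg_mul_neg, ← hright]
  simp only [deriv_sin_mul_sub]
  norm_num
end

section
/- Let κ > 0 with κ² ≤ 12, and for μ > 0 define D(μ) = sinh(μ)·(1 − κ²/μ²)·( (2κ²/μ)·tanh(μ/2) + μ² − κ² ), which is the hyperbolic (negative-λ, λ = −μ²) form of the determinant Det. Then D(μ) = 0 if and only if μ = κ. Equivalently, λ = −κ² is the only negative root of Det. -/
/-! Since `sinh μ > 0`, it suffices that the last factor is positive for `κ² ≤ 12`: multiplied
by `μ` it is `μ³ - κ²(μ - 2 tanh(μ/2))`, and `μ - 2 tanh(μ/2) < μ³/12` because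
`tanh t > t - t³/3` for `t > 0`. Then `D(μ) = 0` forces `μ² = κ²`. -/

namespace Real

theorem sinh_lt_mul_cosh {t : ℝ} (ht : 0 < t) : sinh t < t * cosh t := by
  have hmono : StrictMonoOn (fun x ↦ x * cosh x - sinh x) (Set.Ici 0) := by
    refine strictMonoOn_of_deriv_pos (convex_Ici 0) (by fun_prop) fun x hx ↦ ?_
    rw [interior_Ici, Set.mem_Ioi] at hx
    have hderiv : HasDerivAt (fun x ↦ x * cosh x - sinh x) (x * sinh x) x := by
      refine (((hasDerivAt_id' x).fun_mul (hasDerivAt_cosh x)).fun_sub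
        (hasDerivAt_sinh x)).congr_deriv ?_
      ring
    rw [hderiv.deriv]
    exact mul_pos hx (sinh_pos_iff.2 hx)
  simpa using hmono Set.self_mem_Ici ht.le ht

theorem sub_cube_div_three_mul_cosh_lt_sinh {t : ℝ} (ht : 0 < t) :
    (t - t ^ 3 / 3) * cosh t < sinh t := by
  have hmono : StrictMonoOn (fun x ↦ sinh x - (x - x ^ 3 / 3) * cosh x) (Set.Ici 0) := by
    refine strictMonoOn_of_deriv_pos (convex_Ici 0) (by fun_prop) fun x hx ↦ ?_
    rw [interior_Ici, Set.mem_Ioi] at hx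
    have hderiv : HasDerivAt (fun x ↦ sinh x - (x - x ^ 3 / 3) * cosh x)
        (x * (x * cosh x - sinh x) + x ^ 3 / 3 * sinh x) x := by
      refine ((hasDerivAt_sinh x).fun_sub (((hasDerivAt_id' x).fun_sub
        ((hasDerivAt_pow 3 x).div_const 3)).fun_mul (hasDerivAt_cosh x))).congr_deriv ?_
      ring
    rw [hderiv.deriv]
    exact add_pos (mul_pos hx (sub_pos.2 (sinh_lt_mul_cosh hx)))
      (mul_pos (by positivity) (sinh_pos_iff.2 hx))
  simpa using hmono Set.self_mem_Ici ht.le ht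

theorem sub_cube_div_three_lt_tanh {t : ℝ} (ht : 0 < t) : t - t ^ 3 / 3 < tanh t := by
  rw [tanh_eq_sinh_div_cosh, lt_div_iff₀ (cosh_pos t)]
  exact sub_cube_div_three_mul_cosh_lt_sinh ht

theorem sub_two_mul_tanh_half_lt {μ : ℝ} (hμ : 0 < μ) : μ - 2 * tanh (μ / 2) < μ ^ 3 / 12 := by
  linarith [sub_cube_div_three_lt_tanh (half_pos hμ)]

end Real

theorem det_third_factor_pos {κ μ : ℝ} (hκ12 : κ ^ 2 ≤ 12) (hμ : 0 < μ) :
    0 < 2 * κ ^ 2 / μ * Real.tanh (μ / 2) + μ ^ 2 - κ ^ 2 := by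
  have hkey := Real.sub_two_mul_tanh_half_lt hμ
  have hμ3 := pow_pos hμ 3
  have hmul : μ * (2 * κ ^ 2 / μ * Real.tanh (μ / 2) + μ ^ 2 - κ ^ 2)
      = μ ^ 3 - κ ^ 2 * (μ - 2 * Real.tanh (μ / 2)) := by
    field_simp
    ring
  refine pos_of_mul_pos_right (hmul ▸ ?_) hμ.le
  nlinarith [mul_nonneg (sq_nonneg κ) (sub_pos.2 hkey).le, mul_nonneg (sub_nonneg.2 hκ12) hμ3.le]

/-- **`λ = -κ²` is the only negative root of `Det`.** For `0 < κ` with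
`κ² ≤ 12` and `μ > 0`, the hyperbolic form
`D(μ) = sinh(μ)(1-κ²/μ²)((2κ²/μ)tanh(μ/2) + μ² - κ²)` of the determinant
(obtained by setting `λ = -μ²`) vanishes iff `μ = κ`. -/
theorem det_negative_root (κ : ℝ) (hκ : 0 < κ) (hκ12 : κ ^ 2 ≤ 12)
    (μ : ℝ) (hμ : 0 < μ) :
    Real.sinh μ * (1 - κ ^ 2 / μ ^ 2) *
        (2 * κ ^ 2 / μ * Real.tanh (μ / 2) + μ ^ 2 - κ ^ 2) = 0 ↔
      μ = κ := by
  have hsinh : Real.sinh μ ≠ 0 := (Real.sinh_pos_iff.2 hμ).ne'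
  have hthird := (det_third_factor_pos hκ12 hμ).ne'
  have hμ2 : μ ^ 2 ≠ 0 := by positivity
  simp only [mul_eq_zero, hsinh, hthird, false_or, or_false, sub_eq_zero,
    eq_div_iff hμ2, one_mul]
  exact pow_left_inj₀ hμ.le hκ.le two_ne_zero
end

section
/- Let κ > 0. The time-independent function u(x,t) = cosh(κ(x − 1/2)) is a classical solution of the damped heat equation u_t = u_xx − κ²u on (0,1) × (0,∞), satisfying for all t the non-local boundary conditions u_x(0,t) = −κ²∫₀¹(1−s)·u(s,t)ds and u_x(1,t) = κ²∫₀¹ s·u(s,t)ds. That is, cosh(κ(x − 1/2)) is a steady state of the linearized PNP equation under these boundary conditions. -/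
open Real MeasureTheory

section CoshProfile

variable (κ a : ℝ)

theorem hasDerivAt_cosh_mul_sub (x : ℝ) :
    HasDerivAt (fun y => cosh (κ * (y - a))) (κ * sinh (κ * (x - a))) x := by
  simpa [mul_comm] using (((hasDerivAt_id x).sub_const a).const_mul κ).cosh

theorem hasDerivAt_sinh_mul_sub (x : ℝ) :
    HasDerivAt (fun y => sinh (κ * (y - a))) (κ * cosh (κ * (x - a))) x := by
  simpa [mul_comm] using (((hasDerivAt_id x).sub_const a).const_mul κ).sinh

theorem deriv_deriv_cosh_mul_sub (x : ℝ) :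
    deriv (deriv fun y => cosh (κ * (y - a))) x = κ ^ 2 * cosh (κ * (x - a)) := by
  have hderiv : deriv (fun y => cosh (κ * (y - a))) = fun y => κ * sinh (κ * (y - a)) :=
    funext fun y => (hasDerivAt_cosh_mul_sub κ a y).deriv
  rw [hderiv, ((hasDerivAt_sinh_mul_sub κ a x).const_mul κ).deriv]
  ring

theorem derivWithin_cosh_mul_sub_Icc {x : ℝ} (hx : x ∈ Set.Icc (0 : ℝ) 1) :
    derivWithin (fun y => cosh (κ * (y - a))) (Set.Icc 0 1) x = κ * sinh (κ * (x - a)) :=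
  (hasDerivAt_cosh_mul_sub κ a x).hasDerivWithinAt.derivWithin
    (uniqueDiffOn_Icc zero_lt_one x hx)

end CoshProfile

theorem integral_mul_eq_integral_one_sub_mul {f : ℝ → ℝ} (hf : ∀ s, f (1 - s) = f s) :
    ∫ s in (0 : ℝ)..1, s * f s = ∫ s in (0 : ℝ)..1, (1 - s) * f s := by
  simpa [hf] using
    intervalIntegral.integral_comp_sub_left (a := 0) (b := 1) (fun s => (1 - s) * f s) (1 : ℝ)

theorem two_mul_integral_one_sub_mul {f : ℝ → ℝ} (hf : ∀ s, f (1 - s) = f s)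
    (hf_int : IntervalIntegrable f volume 0 1) :
    2 * ∫ s in (0 : ℝ)..1, (1 - s) * f s = ∫ s in (0 : ℝ)..1, f s := by
  have hweight (g : ℝ → ℝ) (hg : Continuous g) :
      IntervalIntegrable (fun s => g s * f s) volume 0 1 :=
    hf_int.continuousOn_mul hg.continuousOn
  calc 2 * ∫ s in (0 : ℝ)..1, (1 - s) * f s
      = (∫ s in (0 : ℝ)..1, s * f s) + ∫ s in (0 : ℝ)..1, (1 - s) * f s := by
        rw [integral_mul_eq_integral_one_sub_mul hf, two_mul]
    _ = ∫ s in (0 : ℝ)..1, f s := by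
        rw [← intervalIntegral.integral_add (hweight (fun s => s) continuous_id)
          (hweight (fun s => 1 - s) (by fun_prop))]
        simp only [← add_mul, add_sub_cancel, one_mul]

theorem mul_integral_cosh_mul_sub_half (κ : ℝ) :
    κ * ∫ s in (0 : ℝ)..1, cosh (κ * (s - 1/2)) = 2 * sinh (κ / 2) := by
  rw [← intervalIntegral.integral_const_mul,
    intervalIntegral.integral_eq_sub_of_hasDerivAt
      (fun s _ => hasDerivAt_sinh_mul_sub κ (1/2) s) (Continuous.intervalIntegrable (by fun_prop) 0 1)]
  have hsub : κ * ((0 : ℝ) - 1/2) = -(κ / 2) := by ring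
  rw [hsub, sinh_neg]
  ring_nf

theorem cosh_mul_sub_half_symm (κ s : ℝ) :
    cosh (κ * ((1 - s) - 1/2)) = cosh (κ * (s - 1/2)) := by
  rw [← cosh_neg]
  congr 1
  ring

theorem mul_integral_one_sub_mul_cosh (κ : ℝ) :
    κ * ∫ s in (0 : ℝ)..1, (1 - s) * cosh (κ * (s - 1/2)) = sinh (κ / 2) := by
  have h := two_mul_integral_one_sub_mul (f := fun s => cosh (κ * (s - 1/2)))
    (cosh_mul_sub_half_symm κ)
    (Continuous.intervalIntegrable (by fun_prop) 0 1)
  linear_combination (κ / 2) * h + mul_integral_cosh_mul_sub_half κ / 2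

theorem mul_integral_mul_cosh (κ : ℝ) :
    κ * ∫ s in (0 : ℝ)..1, s * cosh (κ * (s - 1/2)) = sinh (κ / 2) := by
  rw [integral_mul_eq_integral_one_sub_mul (cosh_mul_sub_half_symm κ),
    mul_integral_one_sub_mul_cosh]

theorem cosh_steady_state_general (κ : ℝ) :
    IsClassicalSol κ (κ ^ 2) (fun x _ => Real.cosh (κ * (x - 1/2))) := by
  have hsmooth : ContDiff ℝ 2 fun x : ℝ => cosh (κ * (x - 1/2)) := by fun_prop
  refine ⟨fun _ _ => hsmooth.contDiffOn, fun _ _ => contDiffOn_const,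
    Continuous.continuousOn (by fun_prop), ?_, ?_, ?_⟩
  · intro x _ t _
    rw [deriv_const, deriv_deriv_cosh_mul_sub]
    ring
  · intro t _
    have hbdry : κ * ((0 : ℝ) - 1/2) = -(κ / 2) := by ring
    rw [derivWithin_cosh_mul_sub_Icc κ _ (by norm_num), hbdry, sinh_neg]
    linear_combination κ * mul_integral_one_sub_mul_cosh κ
  · intro t _
    have hbdry : κ * ((1 : ℝ) - 1/2) = κ / 2 := by ring
    rw [derivWithin_cosh_mul_sub_Icc κ _ (by norm_num), hbdry]
    linear_combination -κ * mul_integral_mul_cosh κ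

/-- **The steady state.** The time-independent function
`u(x,t) = cosh(κ(x-1/2))` is a classical solution of the linearized PNP
equation `u_t = u_xx - κ²u` under the non-local boundary conditions, i.e. it
is a steady state of the linearized PNP equation. -/
theorem cosh_steady_state (κ : ℝ) (hκ : 0 < κ) :
    IsClassicalSol κ (κ ^ 2) (fun x _ => Real.cosh (κ * (x - 1/2))) :=
  cosh_steady_state_general κ
end
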